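/- For every integer n ≥ 2 and every x ∈ [−1,1], one has f₂(x) := T_n(x) + (x+3)/2 − (3(x+1)/(2n²))·T_n′(x) ≥ 0. Moreover, equality is attained only at x = 1 and, when n is odd, also at x = −1. -/

import Mathlib

/-!
Substituting `x = cos 2u` with `0 < u < π/2` turns `f₂(x)` into `K(n, u) / (n sin u)`, where
`K(N, u) = N sin u (1 + cos² u) + N sin u cos 2Nu - (3/2) cos u sin 2Nu`.
When `N u ≥ 6/5`, Cauchy–Schwarz bounds the oscillating part of `K` by
`√(N² sin² u + (9/4) cos² u)`, which is below `N sin u (1 + cos² u)` as soon as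
`N² sin² u (3 - sin² u) > 9/4`. When `N u ≤ 6/5`, `K` vanishes to fifth order at `u = 0`, and the
alternating Taylor bounds of `sin` and `cos` give `K ≥ N u⁵ (2N⁴/15 - 2N²/3 - 1/8) > 0` for `N ≥ 3`.
For `n = 2` one has `f₂(x) = (x - 1)² / 2`, and at the endpoints `f₂(1) = 0`, `f₂(-1) = (-1)ⁿ + 1`.
-/

open Polynomial

noncomputable def chebT (n : ℕ) : Polynomial ℝ := Polynomial.Chebyshev.T ℝ (n : ℤ)

open Real

lemma nonneg_of_hasDerivAt_nonneg {f f' : ℝ → ℝ} (hf : ∀ x, HasDerivAt f (f' x) x)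
    (h₀ : f 0 = 0) (hf' : ∀ x, 0 ≤ x → 0 ≤ f' x) {x : ℝ} (hx : 0 ≤ x) : 0 ≤ f x := by
  have hmono : MonotoneOn f (Set.Ici 0) :=
    monotoneOn_of_hasDerivWithinAt_nonneg (convex_Ici 0)
      (fun y _ => (hf y).continuousAt.continuousWithinAt) (fun y _ => (hf y).hasDerivWithinAt)
      fun y hy => hf' y (le_of_lt (by simpa using hy))
  simpa [h₀] using hmono Set.self_mem_Ici hx hx

lemma cos_le_quartic {x : ℝ} (hx : 0 ≤ x) : cos x ≤ 1 - x ^ 2 / 2 + x ^ 4 / 24 := by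
  have := nonneg_of_hasDerivAt_nonneg (f := fun y => 1 - y ^ 2 / 2 + y ^ 4 / 24 - cos y)
    (f' := fun y => sin y - (y - y ^ 3 / 6))
    (fun y => ((((hasDerivAt_pow 2 y).div_const 2).const_sub 1).add
        ((hasDerivAt_pow 4 y).div_const 24) |>.sub (hasDerivAt_cos y)).congr_deriv (by ring))
    (by simp) (fun y hy => sub_nonneg.2 (sin_ge_sub_cube hy)) hx
  linarith

lemma sin_le_quintic {x : ℝ} (hx : 0 ≤ x) : sin x ≤ x - x ^ 3 / 6 + x ^ 5 / 120 := by
  have := nonneg_of_hasDerivAt_nonneg (f := fun y => y - y ^ 3 / 6 + y ^ 5 / 120 - sin y)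
    (f' := fun y => 1 - y ^ 2 / 2 + y ^ 4 / 24 - cos y)
    (fun y => ((((hasDerivAt_id' y).sub ((hasDerivAt_pow 3 y).div_const 6)).add
        ((hasDerivAt_pow 5 y).div_const 120)).sub (hasDerivAt_sin y)).congr_deriv (by ring))
    (by simp) (fun y hy => sub_nonneg.2 (cos_le_quartic hy)) hx
  linarith

lemma sextic_le_cos {x : ℝ} (hx : 0 ≤ x) : 1 - x ^ 2 / 2 + x ^ 4 / 24 - x ^ 6 / 720 ≤ cos x := by
  have := nonneg_of_hasDerivAt_nonneg
    (f := fun y => cos y - (1 - y ^ 2 / 2 + y ^ 4 / 24 - y ^ 6 / 720))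
    (f' := fun y => y - y ^ 3 / 6 + y ^ 5 / 120 - sin y)
    (fun y => ((hasDerivAt_cos y).sub ((((hasDerivAt_pow 2 y).div_const 2).const_sub 1).add
        ((hasDerivAt_pow 4 y).div_const 24) |>.sub
          ((hasDerivAt_pow 6 y).div_const 720))).congr_deriv (by ring))
    (by simp) (fun y hy => sub_nonneg.2 (sin_le_quintic hy)) hx
  linarith

noncomputable def askeyGasperKernel (N u : ℝ) : ℝ :=
  N * sin u * (1 + cos u ^ 2) + N * sin u * cos (2 * (N * u)) - 3 / 2 * cos u * sin (2 * (N * u))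

-- A lower bound for `K(N, u) / N` when `N u ≤ 6/5`, obtained from Taylor bounds of `sin` and `cos`.
lemma askeyGasperKernel_minorant_pos {N u : ℝ} (hN : 3 ≤ N) (hu : 0 < u) (hv : N * u ≤ 6 / 5) :
    0 < (u ^ 3 / 3 - u ^ 5 / 24) * (3 - 2 * (N * u) ^ 2 + 2 / 5 * (N * u) ^ 4) - u ^ 3
      + 4 / 15 * (u - u ^ 3 / 6) * (N * u) ^ 4 * (1 - (N * u) ^ 2 / 3) := by
  have hv2 : (N * u) ^ 2 ≤ 36 / 25 := by nlinarith [mul_pos (by linarith : (0 : ℝ) < N) hu]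
  have hu2 : u ^ 2 ≤ 4 / 25 := by nlinarith
  have hlead : 0 < 2 / 15 * N ^ 4 - 2 / 3 * N ^ 2 - 1 / 8 := by
    have hN2 : 9 ≤ N ^ 2 := by nlinarith
    nlinarith [mul_le_mul_of_nonneg_left hN2 (sq_nonneg N)]
  have htail : 1 / 2 ≤ (1 - u ^ 2 / 6) * (1 - (N * u) ^ 2 / 3) := by nlinarith
  have hsplit : (u ^ 3 / 3 - u ^ 5 / 24) * (3 - 2 * (N * u) ^ 2 + 2 / 5 * (N * u) ^ 4) - u ^ 3
      + 4 / 15 * (u - u ^ 3 / 6) * (N * u) ^ 4 * (1 - (N * u) ^ 2 / 3) =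
      u ^ 5 * (2 / 15 * N ^ 4 - 2 / 3 * N ^ 2 - 1 / 8) + 2 / 15 * u ^ 3 * (N * u) ^ 4
        + u ^ 5 * (N * u) ^ 2 / 12 * (1 - (N * u) ^ 2 / 5)
        + 4 / 15 * u * (N * u) ^ 4 * ((1 - u ^ 2 / 6) * (1 - (N * u) ^ 2 / 3) - 1 / 2) := by
    ring
  rw [hsplit]
  have : 0 ≤ 1 - (N * u) ^ 2 / 5 := by linarith
  have : 0 ≤ (1 - u ^ 2 / 6) * (1 - (N * u) ^ 2 / 3) - 1 / 2 := by linarith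
  positivity

lemma askeyGasperKernel_pos_of_mul_le {N u : ℝ} (hN : 3 ≤ N) (hu : 0 < u) (hv : N * u ≤ 6 / 5) :
    0 < askeyGasperKernel N u := by
  have hpoly := askeyGasperKernel_minorant_pos hN hu hv
  have hu2 : u ^ 2 ≤ 4 / 25 := by nlinarith
  have hs_lo := sin_ge_sub_cube hu.le
  have hs_hi := sin_le hu.le
  have hs0 : 0 ≤ sin u := by nlinarith
  have hc0 : 0 ≤ cos u := by nlinarith [one_sub_sq_div_two_le_cos (x := u)]
  have hD : u ^ 3 / 3 - u ^ 5 / 24 ≤ sin u - u * cos u := by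
    nlinarith [cos_le_quartic hu.le]
  have hC := sextic_le_cos (by positivity : 0 ≤ 2 * (N * u))
  have hS := sin_le_quintic (by positivity : 0 ≤ 2 * (N * u))
  have hv0 : 0 ≤ N * u := by positivity
  unfold askeyGasperKernel
  generalize hv_def : N * u = v at *
  have hq : 0 ≤ 3 - 2 * v ^ 2 + 2 / 5 * v ^ 4 := by nlinarith [sq_nonneg (v ^ 2 - 5 / 2)]
  have hw : 0 ≤ v ^ 4 * (1 - v ^ 2 / 3) := by
    have : 0 ≤ 1 - v ^ 2 / 3 := by nlinarith
    positivity
  have hinner : 0 < (sin u - u * cos u) * (3 - 2 * v ^ 2 + 2 / 5 * v ^ 4) - sin u ^ 3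
      + 4 / 15 * sin u * v ^ 4 * (1 - v ^ 2 / 3) := by
    nlinarith [mul_le_mul_of_nonneg_right hD hq, pow_le_pow_left₀ hs0 hs_hi 3,
      mul_le_mul_of_nonneg_right hs_lo hw]
  -- The Taylor bound of `K`, regrouped around `sin u - u cos u = O(u³)`.
  have hid : N * ((sin u - u * cos u) * (3 - 2 * v ^ 2 + 2 / 5 * v ^ 4) - sin u ^ 3
      + 4 / 15 * sin u * v ^ 4 * (1 - v ^ 2 / 3)) =
      N * sin u * (1 + cos u ^ 2) + N * sin u * (1 - 2 * v ^ 2 + 2 / 3 * v ^ 4 - 4 / 45 * v ^ 6)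
        - 3 / 2 * cos u * (2 * v - 4 / 3 * v ^ 3 + 4 / 15 * v ^ 5) := by
    linear_combination (-N * sin u) * sin_sq_add_cos_sq u
      - cos u * (3 - 2 * v ^ 2 + 2 / 5 * v ^ 4) * hv_def
  nlinarith [mul_pos (by linarith : 0 < N) hinner,
    mul_le_mul_of_nonneg_left hC (by positivity : 0 ≤ N * sin u),
    mul_le_mul_of_nonneg_left hS (by positivity : 0 ≤ 3 / 2 * cos u)]

lemma nine_fourths_lt_sq_mul_sin_sq {N u : ℝ} (hN : 2 ≤ N) (hu : 0 < u) (hu' : u < π / 2)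
    (hv : 6 / 5 ≤ N * u) : 9 / 4 < N ^ 2 * sin u ^ 2 * (3 - sin u ^ 2) := by
  have hs : 0 < sin u := sin_pos_of_pos_of_lt_pi hu (by linarith [pi_pos])
  have hc : 0 < cos u := cos_pos_of_mem_Ioo ⟨by linarith, hu'⟩
  have hpyth := sin_sq_add_cos_sq u
  rcases lt_or_ge (cos u) (sin u) with hcs | hsc
  · have ht : 1 / 2 < sin u ^ 2 := by nlinarith [mul_lt_mul'' hcs hcs hc.le hc.le]
    have h₁ : 5 / 4 ≤ sin u ^ 2 * (3 - sin u ^ 2) := by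
      nlinarith [mul_nonneg (sub_nonneg.2 ht.le) (by nlinarith : (0 : ℝ) ≤ 5 / 2 - sin u ^ 2)]
    nlinarith [mul_le_mul (by nlinarith : (4 : ℝ) ≤ N ^ 2) h₁ (by norm_num) (by positivity)]
  · have hu₁ : u ≤ 1 := by
      have := le_tan hu.le hu'
      rw [tan_eq_sin_div_cos, le_div_iff₀ hc] at this
      nlinarith
    have hsu : 5 / 6 * u ≤ sin u := by
      nlinarith [sin_ge_sub_cube hu.le, mul_le_mul_of_nonneg_left
        (by nlinarith : u ^ 2 ≤ 1) hu.le]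
    have hNs : 1 ≤ N * sin u := by nlinarith
    have ht : sin u ^ 2 ≤ 1 / 2 := by nlinarith [mul_le_mul hsc hsc hs.le hc.le]
    nlinarith [mul_le_mul (one_le_pow₀ hNs : 1 ≤ (N * sin u) ^ 2)
      (by linarith : (5 / 2 : ℝ) ≤ 3 - sin u ^ 2) (by norm_num) (by positivity)]

lemma askeyGasperKernel_pos_of_le_mul {N u : ℝ} (hN : 2 ≤ N) (hu : 0 < u) (hu' : u < π / 2)
    (hv : 6 / 5 ≤ N * u) : 0 < askeyGasperKernel N u := by
  have hs : 0 < sin u := sin_pos_of_pos_of_lt_pi hu (by linarith [pi_pos])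
  have hc : 0 < cos u := cos_pos_of_mem_Ioo ⟨by linarith, hu'⟩
  have hpyth := sin_sq_add_cos_sq u
  have hkey := nine_fourths_lt_sq_mul_sin_sq hN hu hu' hv
  set s := sin u
  set c := cos u
  set S := sin (2 * (N * u))
  set C := cos (2 * (N * u))
  have hQ : (N * s * C - 3 / 2 * c * S) ^ 2 ≤ N ^ 2 * s ^ 2 + 9 / 4 * c ^ 2 := by
    nlinarith [sq_nonneg (N * s * S + 3 / 2 * c * C), sin_sq_add_cos_sq (2 * (N * u))]
  have hPQ : N ^ 2 * s ^ 2 + 9 / 4 * c ^ 2 < (N * s * (1 + c ^ 2)) ^ 2 := by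
    have : (N * s * (1 + c ^ 2)) ^ 2 - (N ^ 2 * s ^ 2 + 9 / 4 * c ^ 2) =
        c ^ 2 * (N ^ 2 * s ^ 2 * (3 - s ^ 2) - 9 / 4) := by
      rw [show c ^ 2 = 1 - s ^ 2 by linarith]; ring
    nlinarith [mul_pos (pow_pos hc 2) (sub_pos.2 hkey)]
  have hP : 0 < N * s * (1 + c ^ 2) := by positivity
  unfold askeyGasperKernel
  nlinarith [abs_lt_of_sq_lt_sq' (hQ.trans_lt hPQ) hP.le]

lemma askeyGasperKernel_pos {N u : ℝ} (hN : 3 ≤ N) (hu : 0 < u) (hu' : u < π / 2) :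
    0 < askeyGasperKernel N u := by
  rcases le_total (N * u) (6 / 5) with hv | hv
  · exact askeyGasperKernel_pos_of_mul_le hN hu hv
  · exact askeyGasperKernel_pos_of_le_mul (by linarith) hu hu' hv

lemma chebT_eval_cos (n : ℕ) (θ : ℝ) : (chebT n).eval (cos θ) = cos (n * θ) := by
  exact_mod_cast Chebyshev.T_real_cos θ n

lemma derivative_chebT_eval_cos_mul_sin (n : ℕ) (θ : ℝ) :
    (derivative (chebT n)).eval (cos θ) * sin θ = n * sin (n * θ) := by
  rw [chebT, Chebyshev.T_derivative_eq_U, eval_mul, mul_assoc, Chebyshev.U_real_cos]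
  simp

lemma chebT_eval_one (n : ℕ) : (chebT n).eval 1 = 1 := Chebyshev.T_eval_one ℝ n

lemma chebT_eval_neg_one (n : ℕ) : (chebT n).eval (-1) = (-1) ^ n := by
  simpa using chebT_eval_cos n π |>.trans (cos_nat_mul_pi n)

lemma derivative_chebT_eval_one (n : ℕ) : (derivative (chebT n)).eval 1 = n ^ 2 := by
  rw [chebT, Chebyshev.T_derivative_eq_U, eval_mul, Chebyshev.U_eval_one]
  simp only [Int.cast_natCast, eval_natCast, Int.cast_sub, Int.cast_one, sub_add_cancel]
  ring

lemma chebT_two : chebT 2 = 2 * X ^ 2 - 1 := Chebyshev.T_two ℝ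

noncomputable def askeyGasperFn (n : ℕ) (y : ℝ) : ℝ :=
  (chebT n).eval y + (y + 3) / 2 - 3 * (y + 1) / (2 * (n : ℝ) ^ 2) * (derivative (chebT n)).eval y

lemma askeyGasperFn_one {n : ℕ} (hn : n ≠ 0) : askeyGasperFn n 1 = 0 := by
  rw [askeyGasperFn, chebT_eval_one, derivative_chebT_eval_one]
  field_simp
  ring

lemma askeyGasperFn_neg_one (n : ℕ) : askeyGasperFn n (-1) = (-1) ^ n + 1 := by
  rw [askeyGasperFn, chebT_eval_neg_one]
  ring

lemma askeyGasperFn_two (y : ℝ) : askeyGasperFn 2 y = (y - 1) ^ 2 / 2 := by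
  simp only [askeyGasperFn, chebT_two, derivative_sub, derivative_mul, derivative_X_pow,
    derivative_ofNat, derivative_one, eval_sub, eval_mul, eval_add, eval_pow, eval_X, eval_one,
    eval_ofNat, eval_C, eval_zero]
  ring

lemma askeyGasperFn_cos_two_mul {n : ℕ} (hn : n ≠ 0) {u : ℝ} (hs : sin u ≠ 0) (hc : cos u ≠ 0) :
    askeyGasperFn n (cos (2 * u)) = askeyGasperKernel n u / (n * sin u) := by
  have hT := chebT_eval_cos n (2 * u)
  have hT' := derivative_chebT_eval_cos_mul_sin n (2 * u)
  rw [sin_two_mul] at hT'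
  have hn' : (n : ℝ) ≠ 0 := Nat.cast_ne_zero.2 hn
  have hD : (derivative (chebT n)).eval (cos (2 * u)) =
      n * sin (n * (2 * u)) / (2 * sin u * cos u) := by
    rw [eq_div_iff (by positivity)]; exact hT'
  rw [askeyGasperFn, hT, hD, askeyGasperKernel, cos_two_mul]
  field_simp
  ring

lemma askeyGasperFn_pos {n : ℕ} (hn : 2 ≤ n) {x : ℝ} (hx : x ∈ Set.Ioo (-1) 1) :
    0 < askeyGasperFn n x := by
  obtain rfl | hn3 := eq_or_lt_of_le hn
  · rw [askeyGasperFn_two]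
    have : x - 1 ≠ 0 := by linarith [hx.2]
    positivity
  have hu : 0 < arccos x / 2 := by have := arccos_pos.2 hx.2; positivity
  have hu' : arccos x / 2 < π / 2 := by have := arccos_lt_pi.2 hx.1; linarith
  have hx' : x = cos (2 * (arccos x / 2)) := by
    rw [mul_div_cancel₀ _ two_ne_zero, cos_arccos hx.1.le hx.2.le]
  rw [hx']
  generalize arccos x / 2 = u at hu hu'
  have hs : 0 < sin u := sin_pos_of_pos_of_lt_pi hu (by linarith [pi_pos])
  have hc : 0 < cos u := cos_pos_of_mem_Ioo ⟨by linarith, hu'⟩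
  rw [askeyGasperFn_cos_two_mul (by omega) hs.ne' hc.ne']
  have := askeyGasperKernel_pos (N := n) (by exact_mod_cast hn3) hu hu'
  positivity

/-- The Askey–Gasper inequality in Chebyshev form: for every integer `n ≥ 2` and
every `x ∈ [-1,1]`, `f₂(x) := T_n(x) + (x+3)/2 - (3(x+1)/(2n²)) T_n'(x) ≥ 0`,
with equality only at `x = 1` and, when `n` is odd, also at `x = -1`. -/
theorem askey_gasper_chebyshev (n : ℕ) (hn : 2 ≤ n) (x : ℝ) (hx : x ∈ Set.Icc (-1 : ℝ) 1)
    (f₂ : ℝ → ℝ)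
    (hf₂ : ∀ y : ℝ, f₂ y =
      (chebT n).eval y + (y + 3) / 2 - 3 * (y + 1) / (2 * (n : ℝ) ^ 2) * (derivative (chebT n)).eval y) :
    0 ≤ f₂ x ∧ (f₂ x = 0 ↔ x = 1 ∨ (Odd n ∧ x = -1)) := by
  obtain rfl : f₂ = askeyGasperFn n := funext hf₂
  rcases hx.2.eq_or_lt with rfl | hx₁
  · simp [askeyGasperFn_one (by omega : n ≠ 0)]
  rcases hx.1.eq_or_lt with rfl | hx₀
  · rw [askeyGasperFn_neg_one]
    rcases n.even_or_odd with he | ho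
    · simp [he.neg_one_pow, Nat.not_odd_iff_even.2 he, (by norm_num : (-1 : ℝ) ≠ 1)]
    · simp [ho.neg_one_pow, ho]
  · have hpos := askeyGasperFn_pos hn ⟨hx₀, hx₁⟩
    exact ⟨hpos.le, by simp [hpos.ne', hx₁.ne, hx₀.ne']⟩
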